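/- For positive integers n and r, if nonnegative integers l_1,...,l_r satisfy ∑ l_i = n, l_i ≥ 1 for all i (so that all r bridges are nonempty), and M = max_i (i + l_i) satisfies M - 1 ≤ i + l_i for all i, then M·r - r ≤ r(r+1)/2 + n ≤ M·r, hence M - 1 ≤ (r+1)/2 + n/r ≤ M. -/
import Mathlib


open Finset

/-- The sandwich bound in the bridges problem: if `n` people are distributed on `r`
nonempty bridges, with `lᵢ ≥ 1` people on bridge `i` (cost `i + lᵢ`), `∑ lᵢ = n`,
`M` is the maximum cost, and every bridge has cost at least `M - 1`, then
`M·r - r ≤ r(r+1)/2 + n ≤ M·r`, hence `M - 1 ≤ (r+1)/2 + n/r ≤ M`. -/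
theorem bridges_sandwich (n r : ℕ) (hn : 0 < n) (hr : 0 < r)
    (l : Fin r → ℕ) (hpos : ∀ i, 1 ≤ l i) (hsum : ∑ i, l i = n)
    (M : ℕ)
    (hM : M = Finset.univ.sup (fun i : Fin r => ((i : ℕ) + 1) + l i))
    (hbal : ∀ i : Fin r, M - 1 ≤ ((i : ℕ) + 1) + l i) :
    (M * r - r ≤ r * (r + 1) / 2 + n ∧ r * (r + 1) / 2 + n ≤ M * r) ∧
    ((M : ℝ) - 1 ≤ ((r : ℝ) + 1) / 2 + (n : ℝ) / (r : ℝ) ∧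
      ((r : ℝ) + 1) / 2 + (n : ℝ) / (r : ℝ) ≤ (M : ℝ)) := by
  -- total cost
  have hgauss : ∑ i : Fin r, ((i : ℕ) + 1) = r * (r + 1) / 2 := by
    have h : (∑ i ∈ Finset.range (r + 1), i) * 2 = r * (r + 1) := by
      rw [Finset.sum_range_id_mul_two]; simp [Nat.mul_comm]
    have h2 : ∑ i ∈ Finset.range (r + 1), i = ∑ i ∈ Finset.range r, (i + 1) := by
      rw [Finset.sum_range_succ' (fun i => i) r]; simp
    rw [Fin.sum_univ_eq_sum_range (fun i => i + 1) r]
    omega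
  have hS : ∑ i : Fin r, (((i : ℕ) + 1) + l i) = r * (r + 1) / 2 + n := by
    rw [Finset.sum_add_distrib, hsum, hgauss]
  have hM1 : 1 ≤ M := by
    rw [hM]
    exact le_trans (show 1 ≤ ((⟨0, hr⟩ : Fin r) : ℕ) + 1 + l ⟨0, hr⟩ by omega)
      (Finset.le_sup (f := fun i : Fin r => ((i : ℕ) + 1) + l i)
        (Finset.mem_univ (⟨0, hr⟩ : Fin r)))
  have hupper : r * (r + 1) / 2 + n ≤ M * r := by
    rw [← hS]
    calc ∑ i : Fin r, (((i : ℕ) + 1) + l i) ≤ ∑ _i : Fin r, M := by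
          refine Finset.sum_le_sum fun i _ => ?_
          rw [hM]
          exact Finset.le_sup (f := fun i : Fin r => ((i : ℕ) + 1) + l i) (Finset.mem_univ i)
      _ = M * r := by simp [mul_comm]
  have hlower : M * r - r ≤ r * (r + 1) / 2 + n := by
    have : (M - 1) * r ≤ ∑ i : Fin r, (((i : ℕ) + 1) + l i) := by
      calc (M - 1) * r = ∑ _i : Fin r, (M - 1) := by simp [mul_comm]
        _ ≤ _ := Finset.sum_le_sum fun i _ => hbal i
    rw [hS] at this
    have hr' : (M - 1) * r = M * r - r := by
      rw [Nat.sub_mul, one_mul]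
    omega
  refine ⟨⟨hlower, hupper⟩, ?_, ?_⟩ <;>
  · have hrR : (0 : ℝ) < r := by exact_mod_cast hr
    have hcast : ((r * (r + 1) / 2 + n : ℕ) : ℝ) = (r : ℝ) * ((r : ℝ) + 1) / 2 + n := by
      rw [Nat.cast_add, Nat.cast_div ((Nat.even_mul_succ_self r).two_dvd) (by norm_num)]
      push_cast; ring
    have h1 : ((M * r - r : ℕ) : ℝ) ≤ ((r * (r + 1) / 2 + n : ℕ) : ℝ) := by
      exact_mod_cast hlower
    have h2 : ((r * (r + 1) / 2 + n : ℕ) : ℝ) ≤ (M : ℝ) * r := by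
      exact_mod_cast hupper
    have hsub : ((M * r - r : ℕ) : ℝ) = (M : ℝ) * r - r := by
      have : r ≤ M * r := Nat.le_mul_of_pos_left r hM1
      push_cast [Nat.cast_sub this]; ring
    rw [hcast] at h1 h2
    rw [hsub] at h1
    rw [show ((r : ℝ) + 1) / 2 + (n : ℝ) / r = ((r : ℝ) * ((r : ℝ) + 1) / 2 + n) / r by
      field_simp]
    first
    | (rw [le_div_iff₀ hrR]; nlinarith)
    | (rw [div_le_iff₀ hrR]; nlinarith)
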